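/- arXiv:1511.06893 — 2 statements merged into one kernel-verified Lean document; each statement's English description precedes it below -/
import Mathlib

section
/- A subset S ⊆ GL(d,ℝ) is m-irreducible if and only if it is (d−m)-irreducible, for 1 ≤ m < d. -/
/-!
The wedge product `⋀^m ℝ^d × ⋀^(d-m) ℝ^d → ⋀^d ℝ^d ≅ ℝ` is a perfect pairing, and `Λ(M)` is an
algebra automorphism of the exterior algebra. Hence the annihilator under the wedge product of a
`Λ^m`-invariant subspace `W ≤ ⋀^m` is a `Λ^(d-m)`-invariant subspace of `⋀^(d-m)`, and it is
proper and nonzero when `W` is. Since `d - (d - m) = m`, this gives both directions.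
-/

/-- The endomorphism of the exterior algebra induced by a matrix. -/
noncomputable def extMap (d : ℕ) (M : Matrix (Fin d) (Fin d) ℝ) :
    ExteriorAlgebra ℝ (Fin d → ℝ) →ₗ[ℝ] ExteriorAlgebra ℝ (Fin d → ℝ) :=
  (ExteriorAlgebra.map (Matrix.toLin' M)).toLinearMap

/-- `S ⊆ GL(d,ℝ)` is `m`-irreducible: no proper nonzero subspace `W` of the `m`-th
exterior power is invariant under `Λ^m M` for all `M ∈ S`. -/
def IsIrreducible' (d m : ℕ) (S : Set (GL (Fin d) ℝ)) : Prop :=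
  ¬ ∃ W : Submodule ℝ (ExteriorAlgebra ℝ (Fin d → ℝ)),
      W ≤ ⋀[ℝ]^m (Fin d → ℝ) ∧ W ≠ ⊥ ∧ W ≠ ⋀[ℝ]^m (Fin d → ℝ) ∧
      ∀ M ∈ S, W.map (extMap d (↑M)) = W

open Module

namespace ExteriorAlgebra

section CommRing

variable {R M N : Type*} [CommRing R] [AddCommGroup M] [Module R M] [AddCommGroup N] [Module R N]

lemma map_exteriorPower_le (f : M →ₗ[R] N) (n : ℕ) :
    (⋀[R]^n M).map (map f).toLinearMap ≤ ⋀[R]^n N := by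
  rw [← ιMulti_span_fixedDegree, Submodule.map_span, Submodule.span_le, ← Set.range_comp]
  rintro _ ⟨v, rfl⟩
  exact ιMulti_range R n ⟨f ∘ v, (map_apply_ιMulti f v).symm⟩

variable (R M) in
def wedge (a b : ℕ) : ⋀[R]^a M →ₗ[R] ⋀[R]^b M →ₗ[R] ⋀[R]^(a + b) M :=
  LinearMap.mk₂ R (fun x y => ⟨x * y, SetLike.mul_mem_graded x.2 y.2⟩)
    (fun _ _ _ => Subtype.ext (add_mul _ _ _))
    (fun _ _ _ => Subtype.ext (smul_mul_assoc _ _ _))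
    (fun _ _ _ => Subtype.ext (mul_add _ _ _))
    (fun _ _ _ => Subtype.ext (mul_smul_comm _ _ _))

@[simp]
lemma coe_wedge_apply {a b : ℕ} (x : ⋀[R]^a M) (y : ⋀[R]^b M) :
    (wedge R M a b x y : ExteriorAlgebra R M) = x * y := rfl

/-- For `W ≤ ⋀^a M` with `a + n = dim M`, this is the orthogonal complement of `W` under the
perfect pairing `⋀^a M × ⋀^n M → ⋀^(dim M) M`, whose target is a line. -/
def wedgeAnnihilator (n : ℕ) (W : Submodule R (ExteriorAlgebra R M)) :
    Submodule R (ExteriorAlgebra R M) where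
  carrier := {v | v ∈ ⋀[R]^n M ∧ ∀ w ∈ W, w * v = 0}
  add_mem' hu hv := ⟨add_mem hu.1 hv.1, fun w hw => by
    rw [mul_add, hu.2 w hw, hv.2 w hw, add_zero]⟩
  zero_mem' := ⟨zero_mem _, fun w _ => mul_zero w⟩
  smul_mem' c _ hv := ⟨Submodule.smul_mem _ c hv.1, fun w hw => by
    rw [mul_smul_comm, hv.2 w hw, smul_zero]⟩

lemma wedgeAnnihilator_le_exteriorPower (n : ℕ) (W : Submodule R (ExteriorAlgebra R M)) :
    wedgeAnnihilator n W ≤ ⋀[R]^n M := fun _ hv => hv.1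

lemma map_wedgeAnnihilator_le (f : M →ₗ[R] N) (n : ℕ) (W : Submodule R (ExteriorAlgebra R M)) :
    (wedgeAnnihilator n W).map (map f).toLinearMap ≤
      wedgeAnnihilator n (W.map (map f).toLinearMap) := by
  rintro _ ⟨v, ⟨hv, hvW⟩, rfl⟩
  refine ⟨map_exteriorPower_le f n ⟨v, hv, rfl⟩, ?_⟩
  rintro _ ⟨w, hw, rfl⟩
  simp only [AlgHom.toLinearMap_apply, ← map_mul, hvW w hw, map_zero]

lemma map_wedgeAnnihilator_eq (e : M ≃ₗ[R] M) {n : ℕ} {W : Submodule R (ExteriorAlgebra R M)}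
    (hW : W.map (map (e : M →ₗ[R] M)).toLinearMap = W) :
    (wedgeAnnihilator n W).map (map (e : M →ₗ[R] M)).toLinearMap = wedgeAnnihilator n W := by
  set φ := (map (e : M →ₗ[R] M)).toLinearMap
  set ψ := (map (e.symm : M →ₗ[R] M)).toLinearMap
  have hφψ : φ ∘ₗ ψ = LinearMap.id := by
    rw [← AlgHom.comp_toLinearMap, map_comp_map, e.comp_symm, map_id]; rfl
  have hψφ : ψ ∘ₗ φ = LinearMap.id := by
    rw [← AlgHom.comp_toLinearMap, map_comp_map, e.symm_comp, map_id]; rfl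
  have hWψ : W.map ψ = W := by
    conv_lhs => rw [← hW]
    rw [← Submodule.map_comp, hψφ, Submodule.map_id]
  refine le_antisymm ((map_wedgeAnnihilator_le _ n W).trans_eq (by rw [hW])) ?_
  calc wedgeAnnihilator n W
      = ((wedgeAnnihilator n W).map ψ).map φ := by
        rw [← Submodule.map_comp, hφψ, Submodule.map_id]
    _ ≤ (wedgeAnnihilator n W).map φ :=
        Submodule.map_mono ((map_wedgeAnnihilator_le _ n W).trans_eq (by rw [hWψ]))

end CommRing

section Field

variable {K E : Type*} [Field K] [AddCommGroup E] [Module K E] [FiniteDimensional K E]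

open Set.powersetCard in
theorem eq_zero_of_forall_mul_eq_zero {a b : ℕ} (hab : a + b = finrank K E)
    {x : ExteriorAlgebra K E} (hx : x ∈ ⋀[K]^a E) (h : ∀ y ∈ ⋀[K]^b E, x * y = 0) : x = 0 := by
  set e := finBasis K E
  set c := (e.exteriorPower a).repr ⟨x, hx⟩
  have hx_sum : x = ∑ s, c s • ιMulti_family K a e s := by
    conv_lhs => rw [← Subtype.coe_mk x hx, ← (e.exteriorPower a).sum_repr ⟨x, hx⟩]
    simp [c, exteriorPower.basis_apply]
  suffices hc : ∀ s, c s = 0 by simp [hx_sum, hc]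
  -- Wedging with the basis vector indexed by `sᶜ` isolates the coefficient at `s`.
  intro s
  set t := compl (show b + a = Fintype.card (Fin (finrank K E)) by simp [← hab, add_comm]) s
  have hst : Disjoint s.val t.val := disjoint_compl_right
  have hprod :
      x * ιMulti_family K b e t = c s • (ιMulti_family K a e s * ιMulti_family K b e t) := by
    rw [hx_sum, Finset.sum_mul, Finset.sum_eq_single s]
    · exact smul_mul_assoc _ _ _
    · intro u _ hus
      rw [smul_mul_assoc, ιMulti_family_mul_of_not_disjoint, smul_zero]
      exact fun hut => hus (eq_iff_subset.mpr (disjoint_compl_right_iff.mp hut))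
    · simp
  have hne : ιMulti_family K a e s * ιMulti_family K b e t ≠ 0 := by
    rw [ιMulti_family_mul_of_disjoint _ _ _ _ hst, smul_ne_zero_iff_ne,
      ← exteriorPower.ιMulti_family_apply_coe, ← exteriorPower.basis_apply, ne_eq,
      Submodule.coe_eq_zero]
    exact (e.exteriorPower (a + b)).ne_zero _
  have hzero := h (ιMulti_family K b e t) (ιMulti_range K b ⟨_, rfl⟩)
  rw [hprod, smul_eq_zero] at hzero
  exact hzero.resolve_right hne

lemma finrank_exteriorPower_eq_of_add_eq {a b : ℕ} (hab : a + b = finrank K E) :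
    finrank K (⋀[K]^a E) = finrank K (⋀[K]^b E) := by
  rw [exteriorPower.finrank_eq, exteriorPower.finrank_eq, ← hab, Nat.choose_symm_add]

lemma finrank_exteriorPower_eq_one {n : ℕ} (hn : n = finrank K E) :
    finrank K (⋀[K]^n E) = 1 := by
  rw [exteriorPower.finrank_eq, hn, Nat.choose_self]

theorem wedgeAnnihilator_ne_bot {a b : ℕ} (hab : a + b = finrank K E)
    {W : Submodule K (ExteriorAlgebra K E)} (hWle : W ≤ ⋀[K]^a E) (hW : W ≠ ⋀[K]^a E) :
    wedgeAnnihilator b W ≠ ⊥ := by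
  set W₀ := W.comap (⋀[K]^a E).subtype
  have hW₀ : W₀ ≠ ⊤ := by
    rw [ne_eq, Submodule.comap_subtype_eq_top]
    exact fun h => hW (le_antisymm hWle h)
  have : Module.Free K W₀ := .of_divisionRing K W₀
  set Φ := (wedge K E a b ∘ₗ W₀.subtype).flip
  have hΦ : LinearMap.ker Φ ≠ ⊥ := by
    refine LinearMap.ker_ne_bot_of_finrank_lt
      (V := ⋀[K]^b E) (V₂ := W₀ →ₗ[K] ⋀[K]^(a + b) E) (f := Φ) ?_
    rw [finrank_linearMap K K W₀ (⋀[K]^(a + b) E), finrank_exteriorPower_eq_one hab,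
      mul_one, ← finrank_exteriorPower_eq_of_add_eq hab]
    exact Submodule.finrank_lt hW₀
  obtain ⟨v, hv, hv0⟩ := Submodule.ne_bot_iff _ |>.mp hΦ
  refine Submodule.ne_bot_iff _ |>.mpr ⟨v, ⟨v.2, fun w hw => ?_⟩, by simpa using hv0⟩
  have hΦvw := LinearMap.congr_fun (LinearMap.mem_ker.mp hv) ⟨⟨w, hWle hw⟩, hw⟩
  simpa [Φ] using congrArg Subtype.val hΦvw

theorem wedgeAnnihilator_ne_exteriorPower {a b : ℕ} (hab : a + b = finrank K E)
    {W : Submodule K (ExteriorAlgebra K E)} (hWle : W ≤ ⋀[K]^a E) (hW : W ≠ ⊥) :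
    wedgeAnnihilator b W ≠ ⋀[K]^b E := by
  intro htop
  obtain ⟨w, hw, hw0⟩ := Submodule.ne_bot_iff _ |>.mp hW
  exact hw0 <| eq_zero_of_forall_mul_eq_zero hab (hWle hw) fun y hy => by
    rw [← htop] at hy
    exact hy.2 w hw

end Field

end ExteriorAlgebra

open ExteriorAlgebra in
theorem IsIrreducible'.of_sub {d m : ℕ} (hmd : m ≤ d) {S : Set (GL (Fin d) ℝ)}
    (h : IsIrreducible' d (d - m) S) : IsIrreducible' d m S := by
  rintro ⟨W, hWle, hWbot, hWtop, hWinv⟩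
  have hab : m + (d - m) = finrank ℝ (Fin d → ℝ) := by rw [finrank_fin_fun]; omega
  exact h ⟨wedgeAnnihilator (d - m) W, wedgeAnnihilator_le_exteriorPower _ _,
    wedgeAnnihilator_ne_bot hab hWle hWtop, wedgeAnnihilator_ne_exteriorPower hab hWle hWbot,
    fun M hM => map_wedgeAnnihilator_eq (Matrix.GeneralLinearGroup.toLin M).toLinearEquiv
      (hWinv M hM)⟩

theorem stmt_2_general (d m : ℕ) (hmd : m < d) (S : Set (GL (Fin d) ℝ)) :
    IsIrreducible' d m S ↔ IsIrreducible' d (d - m) S := by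
  refine ⟨fun h => .of_sub (Nat.sub_le d m) ?_, .of_sub hmd.le⟩
  rwa [Nat.sub_sub_self hmd.le]

theorem stmt_2 (d m : ℕ) (hm1 : 1 ≤ m) (hmd : m < d) (S : Set (GL (Fin d) ℝ)) :
    IsIrreducible' d m S ↔ IsIrreducible' d (d - m) S :=
  stmt_2_general d m hmd S
end

section
/- Let Λ be a finite set, let {A_λ}_{λ∈Λ} ⊂ GL(d,ℝ) with ‖A_λ‖ < 1 for each λ, let v = (v_λ)_{λ∈Λ} ∈ ℝ^{d|Λ|}, and let φ_λ(x) = A_λ x + v_λ. Let K be the attractor of the IFS {φ_λ} and assume the strong separation condition: the sets φ_λ(K), λ ∈ Λ, are pairwise disjoint. Then the d-dimensional Lebesgue measure of K is zero and ∑_{λ∈Λ} |det A_λ| < 1. -/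
open Matrix MeasureTheory

/-! Choose `ε > 0` so small that the `ε`-thickenings of the pieces `φ_λ(K)` are still
pairwise disjoint, and `r < 1` bounding the Lipschitz constants of the `φ_λ`. Each `φ_λ` maps
`K_ε` into the `rε`-thickening of `φ_λ(K) ⊆ K`, so comparing volumes gives
`(∑ |det A_λ|) |K_ε| ≤ |K_{rε}|`, while `|K_{rε}| < |K_ε|` because the open shell
`{rε < dist(·, K) < ε}` is nonempty. Hence `∑ |det A_λ| < 1`, and then
`|K| ≤ ∑ |det A_λ| |K|` forces `|K| = 0`. -/

open Function Metric Set Filter Topology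
open scoped NNReal ENNReal

theorem Metric.exists_infDist_eq {E : Type*} [NormedAddCommGroup E] [NormedSpace ℝ E]
    [Nontrivial E] {K : Set E} (hK : Bornology.IsBounded K) (hne : K.Nonempty) {c : ℝ}
    (hc : 0 ≤ c) : ∃ y, infDist y K = c := by
  obtain ⟨x, hx⟩ := hne
  obtain ⟨y, hy⟩ : ∃ y, y ∉ thickening c K := by
    by_contra! h
    exact NormedSpace.unbounded_univ ℝ E (hK.thickening.subset fun y _ => h y)
  rw [mem_thickening_iff_infDist_lt ⟨x, hx⟩, not_lt] at hy
  exact intermediate_value_univ x y (continuous_infDist_pt K)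
    ⟨by rwa [infDist_zero_of_mem hx], hy⟩

theorem MeasureTheory.measure_thickening_lt_measure_thickening {E : Type*}
    [NormedAddCommGroup E] [NormedSpace ℝ E] [Nontrivial E] [MeasurableSpace E]
    [OpensMeasurableSpace E] (μ : Measure E) [μ.IsOpenPosMeasure] {K : Set E}
    (hK : Bornology.IsBounded K) (hne : K.Nonempty) {a b : ℝ} (ha : 0 ≤ a) (hab : a < b)
    (hb : μ (thickening b K) ≠ ∞) : μ (thickening a K) < μ (thickening b K) := by
  set U := (infDist · K) ⁻¹' Ioo a b
  have hU : IsOpen U := isOpen_Ioo.preimage (continuous_infDist_pt K)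
  obtain ⟨y, hy⟩ := exists_infDist_eq hK hne (c := (a + b) / 2) (by linarith)
  have hyU : y ∈ U := by
    simp only [U, mem_preimage, hy, mem_Ioo]
    constructor <;> linarith
  have hdisj : Disjoint (thickening a K) U := by
    refine disjoint_left.2 fun z hz hzU => ?_
    exact (mem_thickening_iff_infDist_lt hne).1 hz |>.not_ge hzU.1.le
  have hsub : thickening a K ∪ U ⊆ thickening b K :=
    union_subset (thickening_mono hab.le K) fun z hz => (mem_thickening_iff_infDist_lt hne).2 hz.2
  calc μ (thickening a K) < μ (thickening a K) + μ U :=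
        ENNReal.lt_add_right (ne_top_of_le_ne_top hb (measure_mono (thickening_mono hab.le K)))
          (hU.measure_pos μ ⟨y, hyU⟩).ne'
    _ = μ (thickening a K ∪ U) := (measure_union hdisj hU.measurableSet).symm
    _ ≤ μ (thickening b K) := measure_mono hsub

theorem Disjoint.eventually_disjoint_thickenings {X : Type*} [PseudoMetricSpace X] {s t : Set X}
    (hst : Disjoint s t) (hs : IsCompact s) (ht : IsClosed t) :
    ∀ᶠ δ in 𝓝[>] (0 : ℝ), Disjoint (thickening δ s) (thickening δ t) := by
  obtain ⟨δ, hδ, h⟩ := hst.exists_thickenings hs ht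
  filter_upwards [Ioo_mem_nhdsGT hδ] with ε hε
  exact h.mono (thickening_mono hε.2.le s) (thickening_mono hε.2.le t)

theorem eventually_pairwise_disjoint_thickenings {X ι : Type*} [MetricSpace X] [Finite ι]
    {s : ι → Set X} (hs : ∀ i, IsCompact (s i)) (hd : Pairwise (Disjoint on s)) :
    ∀ᶠ δ in 𝓝[>] (0 : ℝ),
      Pairwise fun i j => Disjoint (thickening δ (s i)) (thickening δ (s j)) := by
  simp only [Pairwise, eventually_all]
  exact fun i j hij => (hd hij).eventually_disjoint_thickenings (hs i) (hs j).isClosed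

theorem LipschitzWith.image_thickening_subset {X Y : Type*} [PseudoMetricSpace X]
    [PseudoMetricSpace Y] {f : X → Y} {r : ℝ≥0} (hf : LipschitzWith r f) (hr : 0 < r) (ε : ℝ)
    (s : Set X) : f '' thickening ε s ⊆ thickening (r * ε) (f '' s) := by
  rintro _ ⟨x, hx, rfl⟩
  obtain ⟨y, hy, hxy⟩ := mem_thickening_iff.1 hx
  exact mem_thickening_iff.2 ⟨f y, mem_image_of_mem f hy,
    (hf.dist_le_mul x y).trans_lt (mul_lt_mul_of_pos_left hxy hr)⟩

theorem MeasureTheory.Measure.addHaar_image_continuousLinearMap_add {E : Type*}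
    [NormedAddCommGroup E] [NormedSpace ℝ E] [MeasurableSpace E] [BorelSpace E]
    [FiniteDimensional ℝ E] (μ : Measure E) [μ.IsAddHaarMeasure] (f : E →L[ℝ] E) (v : E)
    (s : Set E) :
    μ ((fun x => f x + v) '' s) = ENNReal.ofReal |LinearMap.det (f : E →ₗ[ℝ] E)| * μ s := by
  rw [← image_image (· + v) f, image_add_right, measure_preimage_add_right,
    Measure.addHaar_image_continuousLinearMap]

theorem Matrix.det_toEuclideanCLM {n : Type*} [Fintype n] [DecidableEq n] (A : Matrix n n ℝ) :
    LinearMap.det (toEuclideanCLM (𝕜 := ℝ) A : EuclideanSpace ℝ n →ₗ[ℝ] EuclideanSpace ℝ n) =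
      A.det := by
  rw [coe_toEuclideanCLM_eq_toEuclideanLin]
  exact LinearMap.det_toLin (PiLp.basisFun 2 ℝ n) A

theorem MeasureTheory.measure_eq_zero_of_subset_iUnion_image {α ι : Type*} [MeasurableSpace α]
    (μ : Measure α) [Fintype ι] {φ : ι → α → α} {c : ι → ℝ≥0∞} {K : Set α} (hK : μ K ≠ ∞)
    (hc : ∑ l, c l < 1) (hμφ : ∀ l, μ (φ l '' K) = c l * μ K) (hKsub : K ⊆ ⋃ l, φ l '' K) :
    μ K = 0 := by
  have hle : μ K ≤ μ K * ∑ l, c l :=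
    calc μ K ≤ μ (⋃ l, φ l '' K) := measure_mono hKsub
      _ ≤ ∑ l, μ (φ l '' K) := measure_iUnion_fintype_le μ _
      _ = μ K * ∑ l, c l := by rw [Finset.mul_sum]; simp only [hμφ, mul_comm]
  by_contra h0
  have hlt : μ K * ∑ l, c l < μ K := by simpa using ENNReal.mul_lt_mul_right h0 hK hc
  exact (hle.trans_lt hlt).false

theorem MeasureTheory.sum_lt_one_of_strongSeparation {E ι : Type*} [NormedAddCommGroup E]
    [NormedSpace ℝ E] [Nontrivial E] [MeasurableSpace E] [BorelSpace E] [FiniteDimensional ℝ E]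
    (μ : Measure E) [μ.IsAddHaarMeasure] [Fintype ι] {φ : ι → E → E} {c : ι → ℝ≥0∞} {r : ℝ≥0}
    {K : Set E} (hr0 : 0 < r) (hr1 : r < 1) (hφ : ∀ l, LipschitzWith r (φ l))
    (hμφ : ∀ l s, μ (φ l '' s) = c l * μ s) (hKc : IsCompact K) (hKne : K.Nonempty)
    (hKsub : ∀ l, φ l '' K ⊆ K) (hssc : Pairwise fun i j => Disjoint (φ i '' K) (φ j '' K)) :
    ∑ l, c l < 1 := by
  obtain ⟨ε, hdisjε, hε⟩ := ((eventually_pairwise_disjoint_thickenings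
    (fun l => hKc.image (hφ l).continuous) hssc).and self_mem_nhdsWithin).exists
  have hrε : (r : ℝ) * ε < ε := mul_lt_of_lt_one_left hε hr1
  have hdisjrε : Pairwise fun i j =>
      Disjoint (thickening (r * ε) (φ i '' K)) (thickening (r * ε) (φ j '' K)) :=
    hdisjε.mono fun i j h => h.mono (thickening_mono hrε.le _) (thickening_mono hrε.le _)
  have hle : (∑ l, c l) * μ (thickening ε K) ≤ μ (thickening (r * ε) K) :=
    calc (∑ l, c l) * μ (thickening ε K) = ∑ l, μ (φ l '' thickening ε K) := by
          simp only [hμφ, Finset.sum_mul]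
      _ ≤ ∑ l, μ (thickening (r * ε) (φ l '' K)) := Finset.sum_le_sum fun l _ =>
          measure_mono ((hφ l).image_thickening_subset hr0 ε K)
      _ = μ (⋃ l, thickening (r * ε) (φ l '' K)) := by
          rw [measure_iUnion hdisjrε fun _ => isOpen_thickening.measurableSet, tsum_fintype]
      _ ≤ μ (thickening (r * ε) K) :=
          measure_mono (iUnion_subset fun l => thickening_subset_of_subset _ (hKsub l))
  have hlt := measure_thickening_lt_measure_thickening μ hKc.isBounded hKne (by positivity) hrε
    hKc.isBounded.thickening.measure_lt_top.ne
  by_contra! h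
  exact ((le_mul_of_one_le_left' h).trans hle).not_gt hlt

theorem stmt_6_general (d : ℕ) (ι : Type*) [Fintype ι] (hι : 1 < Fintype.card ι)
    (A : ι → Matrix (Fin d) (Fin d) ℝ)
    (hnorm : ∀ l, ‖toEuclideanCLM (𝕜 := ℝ) (A l)‖ < 1)
    (v : ι → EuclideanSpace ℝ (Fin d))
    (φ : ι → EuclideanSpace ℝ (Fin d) → EuclideanSpace ℝ (Fin d))
    (hφ : ∀ l x, φ l x = toEuclideanCLM (𝕜 := ℝ) (A l) x + v l)
    (K : Set (EuclideanSpace ℝ (Fin d)))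
    (hKc : IsCompact K) (hKne : K.Nonempty)
    (hKattr : K = ⋃ l, φ l '' K)
    (hssc : Pairwise fun l₁ l₂ => Disjoint (φ l₁ '' K) (φ l₂ '' K)) :
    volume K = 0 ∧ ∑ l, |Matrix.det (A l)| < 1 := by
  obtain ⟨i, j, hij⟩ := Fintype.exists_pair_of_one_lt_card hι
  obtain ⟨x, hx⟩ := hKne
  have : Nontrivial (EuclideanSpace ℝ (Fin d)) :=
    ⟨⟨φ i x, φ j x, (hssc hij).ne_of_mem (mem_image_of_mem _ hx) (mem_image_of_mem _ hx)⟩⟩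
  -- `r` is taken strictly above the largest norm so that `0 < r`
  obtain ⟨r, hsr, hr1⟩ := exists_between <|
    (Finset.sup_lt_iff (s := Finset.univ) (f := fun l => ‖toEuclideanCLM (𝕜 := ℝ) (A l)‖₊)
      one_pos).2 fun l _ => hnorm l
  have hr : ∀ l, ‖toEuclideanCLM (𝕜 := ℝ) (A l)‖₊ ≤ r :=
    fun l => (Finset.le_sup (Finset.mem_univ l)).trans hsr.le
  have hφeq : ∀ l, φ l = fun x => toEuclideanCLM (𝕜 := ℝ) (A l) x + v l :=
    fun l => funext (hφ l)
  have hlip : ∀ l, LipschitzWith r (φ l) := fun l => by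
    simpa [hφeq] using ((toEuclideanCLM (𝕜 := ℝ) (A l)).lipschitz.weaken (hr l)).add
      (LipschitzWith.const (v l))
  have hvol : ∀ l s, volume (φ l '' s) = ENNReal.ofReal |(A l).det| * volume s := fun l s => by
    rw [hφeq, Measure.addHaar_image_continuousLinearMap_add, det_toEuclideanCLM]
  have hsum := sum_lt_one_of_strongSeparation volume (hsr.trans_le' bot_le) hr1 hlip hvol hKc
    ⟨x, hx⟩ (fun l => (subset_iUnion (fun l => φ l '' K) l).trans hKattr.superset) hssc
  refine ⟨measure_eq_zero_of_subset_iUnion_image volume hKc.measure_lt_top.ne hsum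
    (fun l => hvol l K) hKattr.subset, ?_⟩
  rwa [← ENNReal.ofReal_sum_of_nonneg fun l _ => abs_nonneg _, ENNReal.ofReal_lt_one] at hsum

/-- If the attractor `K` of a self-affine IFS of invertible contractions satisfies the
strong separation condition, then `K` has Lebesgue measure zero and
`∑ |det A_λ| < 1`. -/
theorem stmt_6 (d : ℕ) (ι : Type*) [Fintype ι] (hι : 1 < Fintype.card ι)
    (A : ι → Matrix (Fin d) (Fin d) ℝ) (hinv : ∀ l, IsUnit (A l))
    (hnorm : ∀ l, ‖toEuclideanCLM (𝕜 := ℝ) (A l)‖ < 1)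
    (v : ι → EuclideanSpace ℝ (Fin d))
    (φ : ι → EuclideanSpace ℝ (Fin d) → EuclideanSpace ℝ (Fin d))
    (hφ : ∀ l x, φ l x = toEuclideanCLM (𝕜 := ℝ) (A l) x + v l)
    (K : Set (EuclideanSpace ℝ (Fin d)))
    (hKc : IsCompact K) (hKne : K.Nonempty)
    (hKattr : K = ⋃ l, φ l '' K)
    (hssc : Pairwise fun l₁ l₂ => Disjoint (φ l₁ '' K) (φ l₂ '' K)) :
    volume K = 0 ∧ ∑ l, |Matrix.det (A l)| < 1 :=
  stmt_6_general d ι hι A hnorm v φ hφ K hKc hKne hKattr hssc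
end
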